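/- arXiv:2306.11589 — 4 statements merged into one kernel-verified Lean document; each statement's English description precedes it below -/
import Mathlib

section
/- Let K be an N×N symmetric positive semi-definite matrix, Σ an N×N symmetric positive definite matrix with Cholesky factorization Σ = LLᵀ, f ∈ ℝᴺ and s ∈ ℝᴺ fixed vectors. Then the two functions α ↦ ‖f + Ls − Kα‖²_{Σ⁻¹} + αᵀKα and α ↦ ‖f − Kα‖²_{Σ⁻¹} + (α − L⁻ᵀs)ᵀK(α − L⁻ᵀs) have identical gradients with respect to α, and hence differ by a constant independent of α. (Here ‖w‖²_{Σ⁻¹} = wᵀΣ⁻¹w.) -/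
/-!
Write `w = L⁻ᵀ s`. Since `Σ⁻¹ L s = L⁻ᵀ L⁻¹ L s = w`, expanding the first Mahalanobis term
around `f - Kα` produces the cross term `2 (f - Kα)ᵀ w = 2 fᵀw - 2 αᵀK w`, while expanding the
prior term of the second objective around `α` produces `-2 αᵀ K w`, using the symmetry of `K`.
The terms linear in `α` cancel, so the objectives differ by the constant
`2 fᵀw + sᵀs - wᵀKw`, and their derivatives agree.
-/

open Matrix

namespace Matrix

variable {n R : Type*} [Fintype n]

section CommRing

variable [CommRing R] {M : Matrix n n R}

theorem IsSymm.dotProduct_mulVec_comm (hM : M.IsSymm) (u v : n → R) :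
    u ⬝ᵥ M *ᵥ v = v ⬝ᵥ M *ᵥ u := by
  simpa only [hM.eq] using dotProduct_transpose_mulVec M u v

theorem IsSymm.dotProduct_mulVec_add_add (hM : M.IsSymm) (u v : n → R) :
    (u + v) ⬝ᵥ M *ᵥ (u + v) = u ⬝ᵥ M *ᵥ u + 2 * (u ⬝ᵥ M *ᵥ v) + v ⬝ᵥ M *ᵥ v := by
  simp only [mulVec_add, dotProduct_add, add_dotProduct, hM.dotProduct_mulVec_comm v u]
  ring

theorem IsSymm.dotProduct_mulVec_sub_sub (hM : M.IsSymm) (u v : n → R) :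
    (u - v) ⬝ᵥ M *ᵥ (u - v) = u ⬝ᵥ M *ᵥ u - 2 * (u ⬝ᵥ M *ᵥ v) + v ⬝ᵥ M *ᵥ v := by
  simp only [mulVec_sub, dotProduct_sub, sub_dotProduct, hM.dotProduct_mulVec_comm v u]
  ring

end CommRing

variable [Field R] [DecidableEq n] {L : Matrix n n R}

theorem mul_transpose_inv_mul_self (hL : IsUnit L.det) : (L * Lᵀ)⁻¹ * L = Lᵀ⁻¹ := by
  rw [mul_inv_rev, Matrix.mul_assoc, nonsing_inv_mul L hL, Matrix.mul_one]

end Matrix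

theorem sampleThenOptimize_objective_eq_varianceReduced_add {n R : Type*} [Fintype n]
    [DecidableEq n] [Field R] {K L : Matrix n n R} (hK : K.IsSymm) (hL : IsUnit L.det)
    (f s α : n → R) :
    (f + L *ᵥ s - K *ᵥ α) ⬝ᵥ (L * Lᵀ)⁻¹ *ᵥ (f + L *ᵥ s - K *ᵥ α) + α ⬝ᵥ K *ᵥ α =
      (f - K *ᵥ α) ⬝ᵥ (L * Lᵀ)⁻¹ *ᵥ (f - K *ᵥ α)
        + (α - Lᵀ⁻¹ *ᵥ s) ⬝ᵥ K *ᵥ (α - Lᵀ⁻¹ *ᵥ s)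
        + (2 * (f ⬝ᵥ Lᵀ⁻¹ *ᵥ s) + s ⬝ᵥ s - Lᵀ⁻¹ *ᵥ s ⬝ᵥ K *ᵥ (Lᵀ⁻¹ *ᵥ s)) := by
  set w := Lᵀ⁻¹ *ᵥ s
  have hw : (L * Lᵀ)⁻¹ *ᵥ (L *ᵥ s) = w := by
    rw [mulVec_mulVec, mul_transpose_inv_mul_self hL]
  have hsw : L *ᵥ s ⬝ᵥ w = s ⬝ᵥ s := by
    rw [dotProduct_comm, dotProduct_mulVec, ← mulVec_transpose, mulVec_mulVec,
      mul_nonsing_inv _ (by rwa [det_transpose]), one_mulVec, dotProduct_comm]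
  have hcross : (f - K *ᵥ α) ⬝ᵥ w = f ⬝ᵥ w - α ⬝ᵥ K *ᵥ w := by
    rw [sub_dotProduct, dotProduct_comm (K *ᵥ α), hK.dotProduct_mulVec_comm w α]
  rw [add_sub_right_comm, (isSymm_mul_transpose_self L).inv.dotProduct_mulVec_add_add,
    hK.dotProduct_mulVec_sub_sub, hw, hsw, hcross]
  ring

theorem sample_then_optimize_objectives_same_gradient_general {N : ℕ}
    (K S L : Matrix (Fin N) (Fin N) ℝ)
    (hK : K.PosSemidef) (hChol : S = L * Lᵀ) (hL : IsUnit L.det)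
    (f s : Fin N → ℝ)
    (L1 L2 : (Fin N → ℝ) → ℝ)
    (hL1 : ∀ α, L1 α = (f + L.mulVec s - K.mulVec α) ⬝ᵥ S⁻¹.mulVec (f + L.mulVec s - K.mulVec α)
        + α ⬝ᵥ K.mulVec α)
    (hL2 : ∀ α, L2 α = (f - K.mulVec α) ⬝ᵥ S⁻¹.mulVec (f - K.mulVec α)
        + (α - (Lᵀ)⁻¹.mulVec s) ⬝ᵥ K.mulVec (α - (Lᵀ)⁻¹.mulVec s)) :
    (∀ α : Fin N → ℝ, fderiv ℝ L1 α = fderiv ℝ L2 α) ∧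
      ∃ c : ℝ, ∀ α : Fin N → ℝ, L1 α = L2 α + c := by
  have hKsymm : K.IsSymm := isHermitian_iff_isSymm.mp hK.isHermitian
  have hconst : ∀ α, L1 α = L2 α + _ := fun α => by
    rw [hL1, hL2, hChol]
    exact sampleThenOptimize_objective_eq_varianceReduced_add hKsymm hL f s α
  refine ⟨fun α => ?_, _, hconst⟩
  rw [funext hconst, fderiv_add_const]

/-- The standard and variance-reduced sample-then-optimize objectives have identical
gradients and hence differ by a constant. -/
theorem sample_then_optimize_objectives_same_gradient {N : ℕ}
    (K S L : Matrix (Fin N) (Fin N) ℝ)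
    (hK : K.PosSemidef) (hS : S.PosDef) (hChol : S = L * Lᵀ) (hL : IsUnit L.det)
    (f s : Fin N → ℝ)
    (L1 L2 : (Fin N → ℝ) → ℝ)
    (hL1 : ∀ α, L1 α = (f + L.mulVec s - K.mulVec α) ⬝ᵥ S⁻¹.mulVec (f + L.mulVec s - K.mulVec α)
        + α ⬝ᵥ K.mulVec α)
    (hL2 : ∀ α, L2 α = (f - K.mulVec α) ⬝ᵥ S⁻¹.mulVec (f - K.mulVec α)
        + (α - (Lᵀ)⁻¹.mulVec s) ⬝ᵥ K.mulVec (α - (Lᵀ)⁻¹.mulVec s)) :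
    (∀ α : Fin N → ℝ, fderiv ℝ L1 α = fderiv ℝ L2 α) ∧
      ∃ c : ℝ, ∀ α : Fin N → ℝ, L1 α = L2 α + c :=
  sample_then_optimize_objectives_same_gradient_general K S L hK hChol hL f s L1 L2 hL1 hL2
end

section
/- Let K_{zz} be M×M symmetric positive definite, K_{xz} an N×M matrix with transpose K_{zx}, and Σ an N×N symmetric positive definite matrix. Define Q = K_{xz} K_{zz}⁻¹ K_{zx}. Then for any w, w' ∈ ℝᴹ (representing evaluation vectors K_{z(·)} at two points) the following covariance identity holds: wᵀ K_{zz}⁻¹ K_{zx} (Q + Σ)⁻¹ K_{xz} K_{zz}⁻¹ w' = wᵀ (K_{zz}⁻¹ − (K_{zx} Σ⁻¹ K_{xz} + K_{zz})⁻¹) w'. Equivalently, K_{zz}⁻¹ K_{zx} (Q + Σ)⁻¹ K_{xz} K_{zz}⁻¹ = K_{zz}⁻¹ − (K_{zx} Σ⁻¹ K_{xz} + K_{zz})⁻¹. -/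
open Matrix

namespace Matrix

variable {m n R : Type*} [Fintype m] [Fintype n] [DecidableEq m] [DecidableEq n] [CommRing R]

/-- The Woodbury identity, solved for its correction term. -/
theorem inv_mul_mul_add_inv_mul_mul_inv_eq_sub {A : Matrix m m R} {S : Matrix n n R}
    (U : Matrix m n R) (V : Matrix n m R) (hA : IsUnit A) (hS : IsUnit S)
    (hVUS : IsUnit (V * A⁻¹ * U + S)) :
    A⁻¹ * U * (V * A⁻¹ * U + S)⁻¹ * V * A⁻¹ = A⁻¹ - (U * S⁻¹ * V + A)⁻¹ := by
  have hS' : S⁻¹⁻¹ = S := nonsing_inv_nonsing_inv S ((isUnit_iff_isUnit_det S).mp hS)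
  have hUnit : IsUnit (S⁻¹⁻¹ + V * A⁻¹ * U) := by rwa [hS', add_comm]
  rw [add_comm (U * S⁻¹ * V),
    add_mul_mul_inv_eq_sub A U S⁻¹ V hA (isUnit_nonsing_inv_iff.mpr hS) hUnit, hS', add_comm S,
    sub_sub_cancel]

end Matrix

/-- The pathwise-conditioned inducing point covariance matches the KL-optimal variational
posterior covariance of Titsias. -/
theorem inducing_point_covariance_identity {N M : ℕ}
    (Kzz : Matrix (Fin M) (Fin M) ℝ) (hKzz : Kzz.PosDef)
    (Kxz : Matrix (Fin N) (Fin M) ℝ)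
    (S : Matrix (Fin N) (Fin N) ℝ) (hS : S.PosDef)
    (Q : Matrix (Fin N) (Fin N) ℝ) (hQ : Q = Kxz * Kzz⁻¹ * Kxzᵀ) :
    (∀ w w' : Fin M → ℝ,
      w ⬝ᵥ (Kzz⁻¹ * Kxzᵀ * (Q + S)⁻¹ * Kxz * Kzz⁻¹).mulVec w' =
        w ⬝ᵥ (Kzz⁻¹ - (Kxzᵀ * S⁻¹ * Kxz + Kzz)⁻¹).mulVec w') ∧
      Kzz⁻¹ * Kxzᵀ * (Q + S)⁻¹ * Kxz * Kzz⁻¹ =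
        Kzz⁻¹ - (Kxzᵀ * S⁻¹ * Kxz + Kzz)⁻¹ := by
  subst hQ
  have hQS : (Kxz * Kzz⁻¹ * Kxzᵀ + S).PosDef := by
    have h := PosDef.posSemidef_add (hKzz.posSemidef.inv.mul_mul_conjTranspose_same Kxz) hS
    rwa [conjTranspose_eq_transpose_of_trivial] at h
  have hmat := inv_mul_mul_add_inv_mul_mul_inv_eq_sub Kxzᵀ Kxz hKzz.isUnit hS.isUnit hQS.isUnit
  exact ⟨fun w w' => by rw [hmat], hmat⟩
end

section
/- Under the same gradient descent setup with M = I − (η/σ²)K(K+σ²I), α* = (K+σ²I)⁻¹y, and eigenpairs (λᵢ, uᵢ) of K, for every step t ≥ 0 and every i: |uᵢᵀ(α* − α_t)| = ((1 − βᵢ)ᵗ/(λᵢ + σ²)) |uᵢᵀ y| ≤ ((1 − βᵢ)ᵗ/σ²) ‖y‖₂, where βᵢ = (η/σ²)λᵢ(λᵢ + σ²). -/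
/-!
Along an eigenvector `uᵢ` of `K`, the error `α* − α_t` of gradient descent evolves by the scalar
recursion `eₜ₊₁ = (1 − βᵢ) eₜ`, because the preconditioned Hessian `(η/σ²) K (K + σ²I)` acts on `uᵢ`
as multiplication by `βᵢ`. Since `α₀ = 0` and `(K + σ²I) α* = y`, the initial error along `uᵢ` is
`uᵢᵀy / (λᵢ + σ²)`. The step-size condition makes `1 − βᵢ ≥ 0`, which gives the equality, and
Cauchy–Schwarz for the unit vector `uᵢ` together with `λᵢ > 0` gives the bound.
-/

open Matrix

section LeftEigenvector

variable {n R : Type*} [Fintype n] [CommRing R]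

theorem vecMul_eq_smul_of_isSymm {K : Matrix n n R} (hK : K.IsSymm) {u : n → R} {μ : R}
    (hu : K *ᵥ u = μ • u) : u ᵥ* K = μ • u := by
  rw [← hu, ← vecMul_transpose, hK.eq]

theorem vecMul_add_smul_one [DecidableEq n] {K : Matrix n n R} {u : n → R} {μ : R}
    (hu : u ᵥ* K = μ • u) (c : R) : u ᵥ* (K + c • 1) = (μ + c) • u := by
  rw [vecMul_add, hu, vecMul_smul, vecMul_one, add_smul]

theorem vecMul_mul_eq_smul {K A : Matrix n n R} {u : n → R} {μ ν : R}
    (hK : u ᵥ* K = μ • u) (hA : u ᵥ* A = ν • u) : u ᵥ* (K * A) = (μ * ν) • u := by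
  rw [← vecMul_vecMul, hK, smul_vecMul, hA, smul_smul]

theorem dotProduct_eq_pow_mul_of_sub_mulVec {M : Matrix n n R} {u : n → R} {μ : R}
    (hu : u ᵥ* M = μ • u) {e : ℕ → n → R} (he : ∀ t, e (t + 1) = e t - M *ᵥ e t) (t : ℕ) :
    u ⬝ᵥ e t = (1 - μ) ^ t * (u ⬝ᵥ e 0) := by
  induction t with
  | zero => simp
  | succ t ih =>
    rw [he, dotProduct_sub, dotProduct_mulVec, hu, smul_dotProduct, ih, smul_eq_mul]
    ring

end LeftEigenvector

theorem sub_iterate_eq_of_mulVec_eq {n R : Type*} [Fintype n] [CommRing R]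
    {B : Matrix n n R} {b x : n → R} (hx : B *ᵥ x = b) {c : R} {α : ℕ → n → R}
    (hα : ∀ t, α (t + 1) = α t - c • (B *ᵥ α t - b)) (t : ℕ) :
    x - α (t + 1) = (x - α t) - (c • B) *ᵥ (x - α t) := by
  rw [hα, ← hx, smul_mulVec, mulVec_sub, smul_sub, smul_sub]
  abel

theorem dotProduct_eq_div_of_vecMul_eq_smul {n K : Type*} [Fintype n] [Field K]
    {A : Matrix n n K} {u x y : n → K} {c : K} (hu : u ᵥ* A = c • u) (hc : c ≠ 0)
    (hx : A *ᵥ x = y) : u ⬝ᵥ x = (u ⬝ᵥ y) / c := by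
  rw [← hx, dotProduct_mulVec, hu, smul_dotProduct, smul_eq_mul, mul_div_cancel_left₀ _ hc]

theorem abs_dotProduct_le_sqrt_of_dotProduct_self_eq_one {n : Type*} [Fintype n] {u : n → ℝ}
    (hu : u ⬝ᵥ u = 1) (y : n → ℝ) : |u ⬝ᵥ y| ≤ Real.sqrt (y ⬝ᵥ y) := by
  refine Real.abs_le_sqrt ?_
  have hcs := Finset.sum_mul_sq_le_sq_mul_sq Finset.univ u y
  simp only [dotProduct, ← sq] at hu ⊢
  rwa [hu, one_mul] at hcs

theorem one_sub_step_nonneg {σ2 η lam lam1 : ℝ} (hσ : 0 < σ2) (hlam : 0 < lam)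
    (hlam1 : lam ≤ lam1) (hη : 0 < η) (hη' : η < σ2 / (lam1 * (lam1 + σ2))) :
    0 ≤ 1 - η / σ2 * lam * (lam + σ2) := by
  have hlam1_pos : 0 < lam1 := hlam.trans_le hlam1
  have hcurv : lam * (lam + σ2) ≤ lam1 * (lam1 + σ2) := by nlinarith
  have hstep : η * (lam1 * (lam1 + σ2)) < σ2 := (lt_div_iff₀ (by positivity)).mp hη'
  rw [sub_nonneg, mul_assoc, div_mul_eq_mul_div, div_le_one hσ]
  nlinarith

/-- Eigendirection-wise error of gradient descent iterates:
`|uᵢᵀ(α* − α_t)| = ((1−βᵢ)ᵗ/(λᵢ+σ²))|uᵢᵀy| ≤ ((1−βᵢ)ᵗ/σ²)‖y‖₂`. -/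
theorem gd_eigendirection_error {N : ℕ}
    (K : Matrix (Fin N) (Fin N) ℝ) (hK : K.PosDef)
    (σ2 : ℝ) (hσ : 0 < σ2) (y : Fin N → ℝ)
    (lam : Fin N → ℝ) (u : Fin N → (Fin N → ℝ))
    (hlam : ∀ i, 0 < lam i)
    (heig : ∀ i, K.mulVec (u i) = lam i • u i)
    (horth : ∀ i j, u i ⬝ᵥ u j = if i = j then 1 else 0)
    (lam1 : ℝ) (hlam1 : ∀ i, lam i ≤ lam1)
    (η : ℝ) (hη : 0 < η) (hη' : η < σ2 / (lam1 * (lam1 + σ2)))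
    (α : ℕ → (Fin N → ℝ)) (hα0 : α 0 = 0)
    (hrec : ∀ t, α (t + 1) =
      α t - η • ((1 / σ2) • ((K * (K + σ2 • (1 : Matrix (Fin N) (Fin N) ℝ))).mulVec (α t)
        - K.mulVec y)))
    (αstar : Fin N → ℝ)
    (hαstar : αstar = (K + σ2 • (1 : Matrix (Fin N) (Fin N) ℝ))⁻¹.mulVec y)
    (β : Fin N → ℝ) (hβ : ∀ i, β i = (η / σ2) * lam i * (lam i + σ2)) :
    ∀ (t : ℕ) (i : Fin N),
      |u i ⬝ᵥ (αstar - α t)| = ((1 - β i) ^ t / (lam i + σ2)) * |u i ⬝ᵥ y| ∧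
      |u i ⬝ᵥ (αstar - α t)| ≤ ((1 - β i) ^ t / σ2) * Real.sqrt (y ⬝ᵥ y) := by
  intro t i
  have hshift_pos : 0 < lam i + σ2 := by linarith [hlam i]
  set A := K + σ2 • (1 : Matrix (Fin N) (Fin N) ℝ)
  have hA_det : IsUnit A.det :=
    (isUnit_iff_isUnit_det A).mp (hK.add_posSemidef (PosSemidef.one.smul hσ.le)).isUnit
  have hsolve : A *ᵥ αstar = y := by
    rw [hαstar, mulVec_mulVec, mul_nonsing_inv _ hA_det, one_mulVec]
  have hK_left : u i ᵥ* K = lam i • u i :=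
    vecMul_eq_smul_of_isSymm (isHermitian_iff_isSymm.mp hK.isHermitian) (heig i)
  have hA_left := vecMul_add_smul_one hK_left σ2
  have hstep_left : u i ᵥ* ((η * (1 / σ2)) • (K * A)) = β i • u i := by
    rw [vecMul_smul, vecMul_mul_eq_smul hK_left hA_left, smul_smul, hβ]
    congr 1
    ring
  have hKA : (K * A) *ᵥ αstar = K *ᵥ y := by rw [← mulVec_mulVec, hsolve]
  have herror : u i ⬝ᵥ (αstar - α t) = (1 - β i) ^ t * ((u i ⬝ᵥ y) / (lam i + σ2)) := by
    have hiter := sub_iterate_eq_of_mulVec_eq hKA (c := η * (1 / σ2)) (α := α)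
      (fun t => by rw [hrec, smul_smul])
    rw [dotProduct_eq_pow_mul_of_sub_mulVec hstep_left (e := (αstar - α ·)) hiter t, hα0,
      sub_zero, dotProduct_eq_div_of_vecMul_eq_smul hA_left hshift_pos.ne' hsolve]
  have hdecay_nonneg : 0 ≤ (1 - β i) ^ t :=
    pow_nonneg (hβ i ▸ one_sub_step_nonneg hσ (hlam i) (hlam1 i) hη hη') t
  have heq : |u i ⬝ᵥ (αstar - α t)| = ((1 - β i) ^ t / (lam i + σ2)) * |u i ⬝ᵥ y| := by
    rw [herror, abs_mul, abs_div, abs_of_nonneg hdecay_nonneg, abs_of_pos hshift_pos]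
    ring
  refine ⟨heq, heq ▸ mul_le_mul ?_ ?_ (abs_nonneg _) (by positivity)⟩
  · exact div_le_div_of_nonneg_left hdecay_nonneg hσ (by linarith [hlam i])
  · exact abs_dotProduct_le_sqrt_of_dotProduct_self_eq_one (by simpa using horth i i) y
end

section
/- Let K be an N×N symmetric positive definite matrix, Σ = σ²I with σ² > 0, and let α* = (K + Σ)⁻¹(f + ε) where f, ε ∈ ℝᴺ. Consider the difference of single-sample minibatch gradient covariances Δ = N·Cov(Kε) − 2N·Cov(KKα*, Kε) taken over the joint Gaussian randomness f ∼ N(0, K), ε ∼ N(0, Σ). Then Δ = N·U Λ² σ² (I − 2Λ(Λ + σ²I)⁻¹) Uᵀ, where K = UΛUᵀ. In particular, the difference is positive semi-definite if and only if λᵢ ≤ σ² for all eigenvalues λᵢ of K. -/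
/-!
Conjugation by the orthogonal matrix `U` is a ⋆-algebra automorphism of the matrix ring which
also commutes with the matrix inverse, so everything can be computed for `D = diagonal λ` and
conjugated back. Since `A` commutes with `(A + s • 1)⁻¹`, the two covariance terms factor as
`A S A - 2 A² (A + S)⁻¹ S A = A² S (1 - 2 A (A + S)⁻¹)` for `S = s • 1`. For `A = D` the right-hand
side is diagonal with entries `λᵢ² σ² (σ² - λᵢ) / (λᵢ + σ²)`, and positive semidefiniteness is
invariant under conjugation by an invertible matrix.
-/

open Matrix

namespace Matrix

variable {n R : Type*} [Fintype n] [DecidableEq n] [CommRing R]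

theorem commute_nonsing_inv_right {A B : Matrix n n R} (h : Commute A B) : Commute A B⁻¹ := by
  rw [nonsing_inv_eq_ringInverse]
  by_cases hB : IsUnit B
  · lift B to (Matrix n n R)ˣ using hB
    rw [Ring.inverse_unit]
    exact h.units_inv_right
  · rw [Ring.inverse_non_unit B hB]
    exact Commute.zero_right A

theorem mul_smul_one_mul_sub_smul_mul_inv (A : Matrix n n R) (s c : R) :
    A * (s • 1) * A - c • (A * A * (A + s • 1)⁻¹ * (s • 1) * A) =
      A ^ 2 * (s • 1) * (1 - c • (A * (A + s • 1)⁻¹)) := by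
  have hA : Commute A (A + s • 1)⁻¹ := commute_nonsing_inv_right <|
    (Commute.refl A).add_right ((Commute.one_right A).smul_right s)
  simp only [Matrix.mul_smul, Matrix.smul_mul, Matrix.mul_one, Matrix.mul_sub, Matrix.mul_assoc,
    smul_smul, pow_two]
  rw [hA.eq, mul_comm c s]

theorem conjStarAlgAut_nonsing_inv [StarRing R] (u : unitary (Matrix n n R)) (A : Matrix n n R) :
    Unitary.conjStarAlgAut R (Matrix n n R) u A⁻¹ =
      (Unitary.conjStarAlgAut R (Matrix n n R) u A)⁻¹ := by
  simp only [Unitary.conjStarAlgAut_apply]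
  rw [mul_inv_rev, mul_inv_rev, inv_eq_left_inv (Unitary.star_mul_self_of_mem u.2),
    inv_eq_left_inv (Unitary.mul_star_self_of_mem u.2), Matrix.mul_assoc]

theorem inv_diagonal_add_smul_one {K : Type*} [Field K] {d : n → K} {s : K}
    (h : ∀ i, d i + s ≠ 0) : (diagonal d + s • 1)⁻¹ = diagonal fun i => (d i + s)⁻¹ := by
  refine inv_eq_right_inv ?_
  rw [smul_one_eq_diagonal, diagonal_add, diagonal_mul_diagonal]
  simp [mul_inv_cancel₀ (h _)]

end Matrix

theorem one_sub_two_mul_mul_inv_nonneg_iff {a s : ℝ} (h : 0 < a + s) :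
    0 ≤ 1 - 2 * (a * (a + s)⁻¹) ↔ a ≤ s := by
  rw [sub_nonneg, ← div_eq_mul_inv, mul_div_assoc', div_le_one h]
  constructor <;> intro <;> linarith

/-- With `f ∼ N(0, K)` and `ε ∼ N(0, σ²I)` independent and `α* = (K + σ²I)⁻¹(f + ε)`, one has
`Cov(Kε) = K S K` and `Cov(KKα*, Kε) = K K (K + S)⁻¹ S K`, so `Δ` is
`N·Cov(Kε) − 2N·Cov(KKα*, Kε)`. -/
theorem minibatch_gradient_variance_difference_general {N : ℕ}
    (K U : Matrix (Fin N) (Fin N) ℝ) (lam : Fin N → ℝ)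
    (hUo : Uᵀ * U = 1)
    (hlam : ∀ i, 0 < lam i)
    (hdecomp : K = U * Matrix.diagonal lam * Uᵀ)
    (σ2 : ℝ) (hσ : 0 < σ2)
    (S : Matrix (Fin N) (Fin N) ℝ) (hS : S = σ2 • (1 : Matrix (Fin N) (Fin N) ℝ))
    (Δ : Matrix (Fin N) (Fin N) ℝ)
    (hΔ : Δ = (N : ℝ) • (K * S * K) - (2 * (N : ℝ)) • (K * K * (K + S)⁻¹ * S * K)) :
    Δ = (N : ℝ) • (U * ((Matrix.diagonal lam) ^ 2 * (σ2 • (1 : Matrix (Fin N) (Fin N) ℝ)) *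
        ((1 : Matrix (Fin N) (Fin N) ℝ) -
          (2 : ℝ) • (Matrix.diagonal lam * (Matrix.diagonal lam + S)⁻¹))) * Uᵀ) ∧
      (0 < N → (Δ.PosSemidef ↔ ∀ i, lam i ≤ σ2)) := by
  subst hS hΔ
  have hUt : star U = Uᵀ := conjTranspose_eq_transpose_of_trivial U
  let u : unitary (Matrix (Fin N) (Fin N) ℝ) := ⟨U, mem_unitaryGroup_iff'.2 (by rwa [hUt])⟩
  let φ := Unitary.conjStarAlgAut ℝ (Matrix (Fin N) (Fin N) ℝ) u
  have hφ (A : Matrix (Fin N) (Fin N) ℝ) : φ A = U * A * Uᵀ := by simp [φ, u, hUt]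
  set M := diagonal lam ^ 2 * (σ2 • 1) * (1 - (2 : ℝ) • (diagonal lam * (diagonal lam + σ2 • 1)⁻¹))
  have hΔ : (N : ℝ) • (K * (σ2 • 1) * K) - (2 * (N : ℝ)) • (K * K * (K + σ2 • 1)⁻¹ * (σ2 • 1) * K)
      = (N : ℝ) • φ M := by
    rw [mul_comm 2, mul_smul, ← smul_sub, mul_smul_one_mul_sub_smul_mul_inv, hdecomp, ← hφ]
    simp only [M, φ, map_mul, map_pow, map_sub, map_smul, map_one, map_add,
      conjStarAlgAut_nonsing_inv]
  have hM : M = diagonal fun i => lam i ^ 2 * σ2 * (1 - 2 * (lam i * (lam i + σ2)⁻¹)) := by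
    have hne (i : Fin N) : lam i + σ2 ≠ 0 := (add_pos (hlam i) hσ).ne'
    simp only [M]
    rw [inv_diagonal_add_smul_one hne, smul_one_eq_diagonal, diagonal_pow, ← diagonal_one]
    simp only [diagonal_mul_diagonal, ← diagonal_smul, diagonal_sub]
    rfl
  refine ⟨by rw [hΔ, hφ], fun hN => ?_⟩
  have hUunit : IsUnit U := Unitary.isUnit_coe (U := u)
  rw [hΔ, ← map_smul, hM, ← diagonal_smul, hφ, ← hUt,
    hUunit.posSemidef_star_right_conjugate_iff, posSemidef_diagonal_iff]
  refine forall_congr' fun i => ?_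
  rw [Pi.smul_apply, smul_eq_mul, mul_nonneg_iff_of_pos_left (Nat.cast_pos.2 hN),
    mul_nonneg_iff_of_pos_left (mul_pos (pow_pos (hlam i) 2) hσ),
    one_sub_two_mul_mul_inv_nonneg_iff (add_pos (hlam i) hσ)]

/-- Difference of single-sample minibatch gradient covariances at convergence.
With `f ∼ N(0,K)` and `ε ∼ N(0,σ²I)` independent and `α* = (K+σ²I)⁻¹(f+ε)`, one has
`Cov(Kε) = σ²K²` and `Cov(KKα*, Kε) = σ²K²(K+σ²I)⁻¹K`, so the covariance difference
`Δ = N·Cov(Kε) − 2N·Cov(KKα*, Kε) = N(KΣK − 2K²(K+Σ)⁻¹ΣK)` satisfies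
`Δ = N·UΛ²σ²(I − 2Λ(Λ+σ²I)⁻¹)Uᵀ`, which is positive semi-definite iff `λᵢ ≤ σ²` for all `i`. -/
theorem minibatch_gradient_variance_difference {N : ℕ}
    (K U : Matrix (Fin N) (Fin N) ℝ) (lam : Fin N → ℝ)
    (hK : K.PosDef) (hU : U * Uᵀ = 1) (hUo : Uᵀ * U = 1)
    (hlam : ∀ i, 0 < lam i)
    (hdecomp : K = U * Matrix.diagonal lam * Uᵀ)
    (σ2 : ℝ) (hσ : 0 < σ2)
    (S : Matrix (Fin N) (Fin N) ℝ) (hS : S = σ2 • (1 : Matrix (Fin N) (Fin N) ℝ))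
    (Δ : Matrix (Fin N) (Fin N) ℝ)
    (hΔ : Δ = (N : ℝ) • (K * S * K) - (2 * (N : ℝ)) • (K * K * (K + S)⁻¹ * S * K)) :
    Δ = (N : ℝ) • (U * ((Matrix.diagonal lam) ^ 2 * (σ2 • (1 : Matrix (Fin N) (Fin N) ℝ)) *
        ((1 : Matrix (Fin N) (Fin N) ℝ) -
          (2 : ℝ) • (Matrix.diagonal lam * (Matrix.diagonal lam + S)⁻¹))) * Uᵀ) ∧
      (0 < N → (Δ.PosSemidef ↔ ∀ i, lam i ≤ σ2)) :=
  minibatch_gradient_variance_difference_general K U lam hUo hlam hdecomp σ2 hσ S hS Δ hΔ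
end
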